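/- arXiv:1210.0568 — 5 statements merged into one kernel-verified Lean document; each statement's English description precedes it below -/
import Mathlib

section
/- Let F be a finite field, K, n ∈ ℕ, and H : F^K → F^n an F-linear map. Let P : F^K → ℝ≥0 be a probability mass function on source words. Suppose D : F^n → F^K is a MAP compression decoder for H, i.e., for every c in the range of H one has H(D(c)) = c and P(D(c)) ≥ P(u') for every u' ∈ F^K with H(u') = c. Consider the additive-noise channel y = x + u where x ranges over the code C = {x ∈ F^K : H(x) = 0} and u ∈ F^K is the noise, decoded by x̂ = y − D(H(y)). Then: (i) for every x ∈ C and every u ∈ F^K, x̂ = x if and only if D(H(u)) = u; consequently (ii) when u is drawn according to P, the block error probability of the channel decoder, ℙ(x̂ ≠ x), equals the block error probability of the compression decoder, ℙ(D(H(u)) ≠ u), and this value is the same for every transmitted codeword x ∈ C. -/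
/-!
A codeword has zero syndrome, so `y = x + u` and the noise `u` share the syndrome `H u`;
hence `y - D (H y) = x` exactly when `D (H u) = u`, whatever the decoder `D`. The two error
events are therefore the same set of noise words, and so carry the same probability.
-/

open Finset

section SyndromeDecoding

variable {M N 𝓕 : Type*} [AddCommGroup M] [AddZeroClass N] [FunLike 𝓕 M N]
  [AddMonoidHomClass 𝓕 M N]

theorem add_sub_decode_eq_iff (H : 𝓕) (D : N → M) {x : M} (hx : H x = 0) (u : M) :
    (x + u) - D (H (x + u)) = x ↔ D (H u) = u := by
  rw [map_add, hx, zero_add, sub_eq_iff_eq_add, add_right_inj, eq_comm]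

theorem filter_add_sub_decode_ne_eq [Fintype M] [DecidableEq M] (H : 𝓕) (D : N → M) {x : M}
    (hx : H x = 0) :
    univ.filter (fun u => (x + u) - D (H (x + u)) ≠ x) = univ.filter (fun u => D (H u) ≠ u) :=
  filter_congr fun u _ => (add_sub_decode_eq_iff H D hx u).not

end SyndromeDecoding

theorem stmt_0_general {F : Type*} [Field F] [Fintype F] [DecidableEq F] (K n : ℕ)
    (H : (Fin K → F) →ₗ[F] (Fin n → F))
    (P : (Fin K → F) → NNReal)
    (D : (Fin n → F) → (Fin K → F)) :
    -- (i) for every codeword `x` and noise `u`, the channel decoder output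
    -- `x̂ = y − D(H y)` (with `y = x + u`) equals `x` iff the compression decoder
    -- recovers the noise: `D (H u) = u`.
    (∀ x : Fin K → F, H x = 0 → ∀ u : Fin K → F,
        (x + u) - D (H (x + u)) = x ↔ D (H u) = u) ∧
    -- (ii) the block error probability of the channel decoder equals the block error
    -- probability of the compression decoder, for every transmitted codeword `x`.
    (∀ x : Fin K → F, H x = 0 →
        ∑ u ∈ univ.filter (fun u : Fin K → F => (x + u) - D (H (x + u)) ≠ x), P u
          = ∑ u ∈ univ.filter (fun u : Fin K → F => D (H u) ≠ u), P u) :=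
  ⟨fun _ hx => add_sub_decode_eq_iff H D hx,
    fun _ hx => by rw [filter_add_sub_decode_ne_eq H D hx]⟩

/-- A MAP compression decoder for the linear compression map `H` yields a
syndrome decoder for the additive-noise channel with codebook `{x | H x = 0}` whose
error events, and hence error probability (the same for every codeword), coincide with
those of the compression decoder. -/
theorem stmt_0 {F : Type*} [Field F] [Fintype F] [DecidableEq F] (K n : ℕ)
    (H : (Fin K → F) →ₗ[F] (Fin n → F))
    (P : (Fin K → F) → NNReal) (hP : ∑ u, P u = 1)
    (D : (Fin n → F) → (Fin K → F))
    (hD_inv : ∀ c ∈ Set.range H, H (D c) = c)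
    (hD_map : ∀ c ∈ Set.range H, ∀ u' : Fin K → F, H u' = c → P u' ≤ P (D c)) :
    -- (i) for every codeword `x` and noise `u`, the channel decoder output
    -- `x̂ = y − D(H y)` (with `y = x + u`) equals `x` iff the compression decoder
    -- recovers the noise: `D (H u) = u`.
    (∀ x : Fin K → F, H x = 0 → ∀ u : Fin K → F,
        (x + u) - D (H (x + u)) = x ↔ D (H u) = u) ∧
    -- (ii) the block error probability of the channel decoder equals the block error
    -- probability of the compression decoder, for every transmitted codeword `x`.
    (∀ x : Fin K → F, H x = 0 →
        ∑ u ∈ univ.filter (fun u : Fin K → F => (x + u) - D (H (x + u)) ≠ x), P u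
          = ∑ u ∈ univ.filter (fun u : Fin K → F => D (H u) ≠ u), P u) :=
  stmt_0_general K n H P D
end

section
/- Let G = (ZMod 2) × (ZMod 2), μ the QPSK Gray labeling and w the reflections, acting componentwise. Let enc : G^K → G^n be an additive group homomorphism (the linear encoder u ↦ uH), P : G^K → ℝ≥0 a probability mass function, N₀ > 0, u ∈ G^K the source realization, z ∈ ℂ^n the Gaussian noise realization, x = enc(u), and y = μ(x) + z the channel output. Define the joint source-channel MAP objective Φ_B(u') = exp(−‖y − μ(enc(u'))‖²/N₀)·P(u') and the composite-channel MAP objective (for transmitted all-zero codeword, discrete-block noise u and AWGN-block noise w_x(z)) Φ_A(v') = exp(−‖μ(0) + w_x(z) − μ(enc(v'))‖²/N₀)·P(v' + u). Then Φ_B(u') = Φ_A(u' + u) for every u' ∈ G^K; consequently the set of maximizers of Φ_B equals the translate by u of the set of maximizers of Φ_A. -/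
/-!
The reflection `w_x` is a real-linear isometry of `ℂ` that permutes the QPSK constellation by
translation, `w_x (μ c) = μ (x + c)`. Applying `w_x` to the residual `μ x + z - μ (enc u')` of the
source–channel decoder therefore yields `μ 0 + w_x z - μ (enc u' + x)`, the residual of the
composite-channel decoder at `u' + u`, since `enc` is additive, `x = enc u` and `x + x = 0`.
Hence the two objectives agree up to the shift `u' ↦ u' + u`, an involution, which then carries
the maximizers of one onto those of the other.
-/

open Complex

lemma neg_one_pow_val_add {R : Type*} [Ring R] (a b : ZMod 2) :
    (-1 : R) ^ (a + b).val = (-1) ^ a.val * (-1) ^ b.val := by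
  rw [ZMod.val_add, ← neg_one_pow_eq_pow_mod_two, pow_add]

lemma neg_one_pow_sq {R : Type*} [Monoid R] [HasDistribNeg R] (k : ℕ) :
    ((-1 : R) ^ k) ^ 2 = 1 := by
  rw [← pow_mul, pow_mul', neg_one_sq, one_pow]

noncomputable def qpsk (c : ZMod 2 × ZMod 2) : ℂ :=
  ((-1 : ℂ) ^ c.1.val + (-1 : ℂ) ^ c.2.val * I) / (Real.sqrt 2 : ℂ)

def qpskReflect (a : ZMod 2 × ZMod 2) : ℂ →ₗᵢ[ℝ] ℂ where
  toFun z := ⟨(-1) ^ a.1.val * z.re, (-1) ^ a.2.val * z.im⟩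
  map_add' z z' := by apply Complex.ext <;> simp only [add_re, add_im] <;> ring
  map_smul' r z := by
    apply Complex.ext <;> simp only [smul_re, smul_im, RingHom.id_apply, smul_eq_mul] <;> ring
  norm_map' z := by
    simp only [LinearMap.coe_mk, AddHom.coe_mk, norm_def, normSq_apply, ← sq, mul_pow,
      neg_one_pow_sq, one_mul]

lemma qpskReflect_apply (a : ZMod 2 × ZMod 2) (z : ℂ) :
    qpskReflect a z = (-1 : ℂ) ^ a.1.val * (z.re : ℂ) + (-1 : ℂ) ^ a.2.val * (z.im : ℂ) * I := by
  apply Complex.ext <;> simp [qpskReflect, ← ofReal_one, ← ofReal_neg, ← ofReal_pow]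

lemma qpsk_re (c : ZMod 2 × ZMod 2) : (qpsk c).re = (-1) ^ c.1.val / Real.sqrt 2 := by
  simp [qpsk, ← ofReal_one, ← ofReal_neg, ← ofReal_pow]

lemma qpsk_im (c : ZMod 2 × ZMod 2) : (qpsk c).im = (-1) ^ c.2.val / Real.sqrt 2 := by
  simp [qpsk, ← ofReal_one, ← ofReal_neg, ← ofReal_pow]

lemma qpskReflect_qpsk (a c : ZMod 2 × ZMod 2) : qpskReflect a (qpsk c) = qpsk (a + c) := by
  apply Complex.ext <;>
    simp only [qpskReflect, LinearIsometry.coe_mk, LinearMap.coe_mk, AddHom.coe_mk, qpsk_re,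
      qpsk_im, Prod.fst_add, Prod.snd_add, neg_one_pow_val_add] <;> ring

lemma norm_label_add_sub_label_eq {G E : Type*} [AddCommGroup G] [Module (ZMod 2) G]
    [SeminormedAddCommGroup E] [NormedSpace ℝ E] (μ : G → E) (w : G → E →ₗᵢ[ℝ] E)
    (hw : ∀ a c, w a (μ c) = μ (a + c)) (x c : G) (z : E) :
    ‖μ x + z - μ c‖ = ‖μ 0 + w x z - μ (c + x)‖ := by
  rw [← (w x).norm_map, map_sub, map_add, hw, hw, ZModModule.add_self, add_comm x c]

lemma ZModModule.add_add_cancel_right {G : Type*} [AddCommGroup G] [Module (ZMod 2) G]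
    (v u : G) : v + u + u = v := by
  rw [← ZModModule.sub_eq_add, add_sub_cancel_right]

lemma ZModModule.add_right_involutive {G : Type*} [AddCommGroup G] [Module (ZMod 2) G]
    (u : G) : Function.Involutive (· + u) :=
  fun v => ZModModule.add_add_cancel_right v u

lemma Function.Involutive.setOf_forall_comp_le_eq_image {α β : Type*} [Preorder β]
    {σ : α → α} (hσ : σ.Involutive) (g : α → β) :
    {a | ∀ b, g (σ b) ≤ g (σ a)} = σ '' {a | ∀ b, g b ≤ g a} := by
  rw [hσ.image_eq_preimage_symm]
  ext a
  exact ⟨fun h b => hσ b ▸ h (σ b), fun h b => h (σ b)⟩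

theorem stmt_6_general (K n : ℕ)
    (μ : ZMod 2 × ZMod 2 → ℂ)
    (hμ : ∀ x : ZMod 2 × ZMod 2,
      μ x = ((-1 : ℂ) ^ x.1.val + (-1 : ℂ) ^ x.2.val * Complex.I) / (Real.sqrt 2 : ℂ))
    (w : ZMod 2 × ZMod 2 → ℂ → ℂ)
    (hw : ∀ (x : ZMod 2 × ZMod 2) (z : ℂ),
      w x z = (-1 : ℂ) ^ x.1.val * (z.re : ℂ) + (-1 : ℂ) ^ x.2.val * (z.im : ℂ) * Complex.I)
    (enc : (Fin K → ZMod 2 × ZMod 2) →+ (Fin n → ZMod 2 × ZMod 2))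
    (P : (Fin K → ZMod 2 × ZMod 2) → NNReal)
    (N₀ : ℝ)
    (u : Fin K → ZMod 2 × ZMod 2) (z : Fin n → ℂ)
    (x : Fin n → ZMod 2 × ZMod 2) (hx : x = enc u)
    (y : Fin n → ℂ) (hy : ∀ t, y t = μ (x t) + z t)
    (ΦB ΦA : (Fin K → ZMod 2 × ZMod 2) → ℝ)
    (hΦB : ∀ u', ΦB u' =
      Real.exp (-(∑ t, ‖y t - μ (enc u' t)‖ ^ 2) / N₀) * (P u' : ℝ))
    (hΦA : ∀ v', ΦA v' =
      Real.exp (-(∑ t, ‖μ 0 + w (x t) (z t) - μ (enc v' t)‖ ^ 2) / N₀) * (P (v' + u) : ℝ)) :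
    (∀ u', ΦB u' = ΦA (u' + u)) ∧
    {u' | ∀ u'', ΦB u'' ≤ ΦB u'} = (fun v' => v' + u) '' {v' | ∀ v'', ΦA v'' ≤ ΦA v'} := by
  obtain rfl : μ = qpsk := funext hμ
  obtain rfl : w = fun a => ⇑(qpskReflect a) :=
    funext₂ fun a z => (hw a z).trans (qpskReflect_apply a z).symm
  subst hx
  have hBA : ∀ u', ΦB u' = ΦA (u' + u) := by
    intro u'
    rw [hΦB, hΦA, ZModModule.add_add_cancel_right]
    congr 4
    refine Finset.sum_congr rfl fun t _ => ?_
    rw [hy, map_add, Pi.add_apply, norm_label_add_sub_label_eq qpsk qpskReflect qpskReflect_qpsk]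
  refine ⟨hBA, ?_⟩
  obtain rfl : ΦB = fun v => ΦA (v + u) := funext hBA
  exact (ZModModule.add_right_involutive u).setOf_forall_comp_le_eq_image ΦA

/-- The joint source-channel MAP objective `Φ_B` and the composite-channel
MAP objective `Φ_A` (all-zero codeword, discrete-block noise `u`, AWGN-block noise
`w_x(z)`) satisfy `Φ_B(u') = Φ_A(u' + u)` for every `u'`; consequently the set of
maximizers of `Φ_B` is the translate by `u` of the set of maximizers of `Φ_A`. -/
theorem stmt_6 (K n : ℕ)
    (μ : ZMod 2 × ZMod 2 → ℂ)
    (hμ : ∀ x : ZMod 2 × ZMod 2,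
      μ x = ((-1 : ℂ) ^ x.1.val + (-1 : ℂ) ^ x.2.val * Complex.I) / (Real.sqrt 2 : ℂ))
    (w : ZMod 2 × ZMod 2 → ℂ → ℂ)
    (hw : ∀ (x : ZMod 2 × ZMod 2) (z : ℂ),
      w x z = (-1 : ℂ) ^ x.1.val * (z.re : ℂ) + (-1 : ℂ) ^ x.2.val * (z.im : ℂ) * Complex.I)
    (enc : (Fin K → ZMod 2 × ZMod 2) →+ (Fin n → ZMod 2 × ZMod 2))
    (P : (Fin K → ZMod 2 × ZMod 2) → NNReal) (hP : ∑ u, P u = 1)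
    (N₀ : ℝ) (hN₀ : 0 < N₀)
    (u : Fin K → ZMod 2 × ZMod 2) (z : Fin n → ℂ)
    (x : Fin n → ZMod 2 × ZMod 2) (hx : x = enc u)
    (y : Fin n → ℂ) (hy : ∀ t, y t = μ (x t) + z t)
    (ΦB ΦA : (Fin K → ZMod 2 × ZMod 2) → ℝ)
    (hΦB : ∀ u', ΦB u' =
      Real.exp (-(∑ t, ‖y t - μ (enc u' t)‖ ^ 2) / N₀) * (P u' : ℝ))
    (hΦA : ∀ v', ΦA v' =
      Real.exp (-(∑ t, ‖μ 0 + w (x t) (z t) - μ (enc v' t)‖ ^ 2) / N₀) * (P (v' + u) : ℝ)) :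
    (∀ u', ΦB u' = ΦA (u' + u)) ∧
    {u' | ∀ u'', ΦB u'' ≤ ΦB u'} = (fun v' => v' + u) '' {v' | ∀ v'', ΦA v'' ≤ ΦA v'} :=
  stmt_6_general K n μ hμ w hw enc P N₀ u z x hx y hy ΦB ΦA hΦB hΦA
end

section
/- (Theorem 1, error-region congruence, for QPSK/GF(4).) In the setting of the MAP objective correspondence, fix u ∈ G^K, set x = enc(u), and for z ∈ ℂ^n define the joint source-channel MAP error region E(u) = {z : ∃ u' ≠ u with exp(−‖μ(x)+z−μ(enc(u'))‖²/N₀)·P(u') ≥ exp(−‖z‖²/N₀)·P(u)} and the composite-channel MAP error region for the all-zero codeword E₀(u) = {z : ∃ v' ≠ 0 with exp(−‖μ(0)+z−μ(enc(v'))‖²/N₀)·P(v'+u) ≥ exp(−‖z‖²/N₀)·P(u)}. Then for every z ∈ ℂ^n: z ∈ E(u) if and only if w_x(z) ∈ E₀(u); i.e., E₀(u) = w_x(E(u)), so the two error regions are congruent via the isometry w_x of ℂ^n (which depends on u). -/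
/-!
The reflection `w_a` is an isometry of `ℂ` sending the Gray label `μ b` to `μ (a + b)`.
Since `a + a = 0` in `GF(4)`, it sends `μ a + z - μ (c + a)` to `μ 0 + w_a z - μ c`, so after
the substitution `u' = v' + u` (which matches `v' ≠ 0` with `u' ≠ u`, and gives
`enc u' = enc v' + x`) the competitors in the two error regions have equal objective values
term by term. As `w_x` is an involution, the pointwise equivalence yields the image statement.
-/

namespace QPSK

def sign (a : ZMod 2) : ℝ := (-1) ^ a.val

lemma sign_add (a b : ZMod 2) : sign (a + b) = sign a * sign b := by
  rw [sign, sign, sign, ZMod.val_add, ← neg_one_pow_eq_pow_mod_two, pow_add]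

lemma sign_mul_self (a : ZMod 2) : sign a * sign a = 1 := by
  rw [← sign_add, CharTwo.add_self_eq_zero]; simp [sign]

noncomputable def label (a : ZMod 2 × ZMod 2) : ℂ := ⟨sign a.1 / √2, sign a.2 / √2⟩

def reflect (a : ZMod 2 × ZMod 2) (z : ℂ) : ℂ := ⟨sign a.1 * z.re, sign a.2 * z.im⟩

lemma ofReal_sign (a : ZMod 2) : (sign a : ℂ) = (-1) ^ a.val := by
  push_cast [sign]; rfl

lemma label_eq (a : ZMod 2 × ZMod 2) :
    label a = ((-1 : ℂ) ^ a.1.val + (-1 : ℂ) ^ a.2.val * Complex.I) / (√2 : ℂ) := by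
  rw [← ofReal_sign, ← ofReal_sign]
  apply Complex.ext <;> simp [label, Complex.div_ofReal_re, Complex.div_ofReal_im]

lemma reflect_eq (a : ZMod 2 × ZMod 2) (z : ℂ) :
    reflect a z =
      (-1 : ℂ) ^ a.1.val * (z.re : ℂ) + (-1 : ℂ) ^ a.2.val * (z.im : ℂ) * Complex.I := by
  rw [← ofReal_sign, ← ofReal_sign]
  apply Complex.ext <;> simp [reflect]

lemma reflect_add (a : ZMod 2 × ZMod 2) (z z' : ℂ) :
    reflect a (z + z') = reflect a z + reflect a z' := by
  apply Complex.ext <;> simp only [reflect, Complex.add_re, Complex.add_im] <;> ring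

lemma reflect_sub (a : ZMod 2 × ZMod 2) (z z' : ℂ) :
    reflect a (z - z') = reflect a z - reflect a z' := by
  apply Complex.ext <;> simp only [reflect, Complex.sub_re, Complex.sub_im] <;> ring

lemma reflect_reflect (a : ZMod 2 × ZMod 2) (z : ℂ) : reflect a (reflect a z) = z := by
  apply Complex.ext <;> simp only [reflect, ← mul_assoc, sign_mul_self, one_mul]

lemma norm_reflect (a : ZMod 2 × ZMod 2) (z : ℂ) : ‖reflect a z‖ = ‖z‖ := by
  simp only [Complex.norm_def, Complex.normSq_apply, reflect]
  congr 1
  linear_combination z.re * z.re * sign_mul_self a.1 + z.im * z.im * sign_mul_self a.2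

lemma reflect_label (a b : ZMod 2 × ZMod 2) : reflect a (label b) = label (a + b) := by
  apply Complex.ext <;> simp only [reflect, label, Prod.fst_add, Prod.snd_add, sign_add] <;> ring

lemma norm_label_zero_add_reflect_sub (a c : ZMod 2 × ZMod 2) (z : ℂ) :
    ‖label 0 + reflect a z - label c‖ = ‖label a + z - label (c + a)‖ := by
  have h : label 0 + reflect a z - label c = reflect a (label a + z - label (c + a)) := by
    rw [reflect_sub, reflect_add, reflect_label, reflect_label, CharTwo.add_self_eq_zero,
      add_comm c, ← add_assoc, CharTwo.add_self_eq_zero, zero_add]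
  rw [h, norm_reflect]

end QPSK

theorem stmt_7_general (K n : ℕ)
    (μ : ZMod 2 × ZMod 2 → ℂ)
    (hμ : ∀ x : ZMod 2 × ZMod 2,
      μ x = ((-1 : ℂ) ^ x.1.val + (-1 : ℂ) ^ x.2.val * Complex.I) / (Real.sqrt 2 : ℂ))
    (w : ZMod 2 × ZMod 2 → ℂ → ℂ)
    (hw : ∀ (x : ZMod 2 × ZMod 2) (z : ℂ),
      w x z = (-1 : ℂ) ^ x.1.val * (z.re : ℂ) + (-1 : ℂ) ^ x.2.val * (z.im : ℂ) * Complex.I)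
    (enc : (Fin K → ZMod 2 × ZMod 2) →+ (Fin n → ZMod 2 × ZMod 2))
    (P : (Fin K → ZMod 2 × ZMod 2) → NNReal)
    (N₀ : ℝ)
    (u : Fin K → ZMod 2 × ZMod 2)
    (x : Fin n → ZMod 2 × ZMod 2) (hx : x = enc u)
    (E E₀ : Set (Fin n → ℂ))
    (hE : E = {z | ∃ u', u' ≠ u ∧
      Real.exp (-(∑ t, ‖z t‖ ^ 2) / N₀) * (P u : ℝ) ≤
        Real.exp (-(∑ t, ‖μ (x t) + z t - μ (enc u' t)‖ ^ 2) / N₀) * (P u' : ℝ)})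
    (hE₀ : E₀ = {z | ∃ v', v' ≠ 0 ∧
      Real.exp (-(∑ t, ‖z t‖ ^ 2) / N₀) * (P u : ℝ) ≤
        Real.exp (-(∑ t, ‖μ 0 + z t - μ (enc v' t)‖ ^ 2) / N₀) * (P (v' + u) : ℝ)}) :
    (∀ z : Fin n → ℂ, z ∈ E ↔ (fun t => w (x t) (z t)) ∈ E₀) ∧
    E₀ = (fun z : Fin n → ℂ => fun t => w (x t) (z t)) '' E := by
  obtain rfl : μ = QPSK.label := funext fun a => (hμ a).trans (QPSK.label_eq a).symm
  obtain rfl : w = QPSK.reflect := funext₂ fun a z => (hw a z).trans (QPSK.reflect_eq a z).symm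
  set W : (Fin n → ℂ) → Fin n → ℂ := fun z t => QPSK.reflect (x t) (z t)
  have hW : W.Involutive := fun z => funext fun t => QPSK.reflect_reflect (x t) (z t)
  have key : ∀ z, z ∈ E ↔ W z ∈ E₀ := by
    intro z
    simp only [hE, hE₀, Set.mem_ofPred_eq, W, QPSK.norm_reflect]
    refine ((Equiv.addRight u).exists_congr fun v' => ?_).symm
    simp only [Equiv.coe_addRight, ne_eq, add_eq_right, map_add, hx, Pi.add_apply,
      QPSK.norm_label_zero_add_reflect_sub]
  refine ⟨key, ?_⟩
  rw [show E = W ⁻¹' E₀ from Set.ext key, Set.image_preimage_eq E₀ hW.surjective]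

/-- Theorem 1, error-region congruence, for QPSK/GF(4): the joint
source-channel MAP error region `E(u)` and the composite-channel MAP error region
`E₀(u)` for the all-zero codeword satisfy `z ∈ E(u) ↔ w_x(z) ∈ E₀(u)` (with
`x = enc u`), i.e. `E₀(u) = w_x(E(u))`: the two error regions are congruent via the
isometry `w_x` of ℂ^n. -/
theorem stmt_7 (K n : ℕ)
    (μ : ZMod 2 × ZMod 2 → ℂ)
    (hμ : ∀ x : ZMod 2 × ZMod 2,
      μ x = ((-1 : ℂ) ^ x.1.val + (-1 : ℂ) ^ x.2.val * Complex.I) / (Real.sqrt 2 : ℂ))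
    (w : ZMod 2 × ZMod 2 → ℂ → ℂ)
    (hw : ∀ (x : ZMod 2 × ZMod 2) (z : ℂ),
      w x z = (-1 : ℂ) ^ x.1.val * (z.re : ℂ) + (-1 : ℂ) ^ x.2.val * (z.im : ℂ) * Complex.I)
    (enc : (Fin K → ZMod 2 × ZMod 2) →+ (Fin n → ZMod 2 × ZMod 2))
    (P : (Fin K → ZMod 2 × ZMod 2) → NNReal)
    (N₀ : ℝ) (hN₀ : 0 < N₀)
    (u : Fin K → ZMod 2 × ZMod 2)
    (x : Fin n → ZMod 2 × ZMod 2) (hx : x = enc u)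
    (E E₀ : Set (Fin n → ℂ))
    (hE : E = {z | ∃ u', u' ≠ u ∧
      Real.exp (-(∑ t, ‖z t‖ ^ 2) / N₀) * (P u : ℝ) ≤
        Real.exp (-(∑ t, ‖μ (x t) + z t - μ (enc u' t)‖ ^ 2) / N₀) * (P u' : ℝ)})
    (hE₀ : E₀ = {z | ∃ v', v' ≠ 0 ∧
      Real.exp (-(∑ t, ‖z t‖ ^ 2) / N₀) * (P u : ℝ) ≤
        Real.exp (-(∑ t, ‖μ 0 + z t - μ (enc v' t)‖ ^ 2) / N₀) * (P (v' + u) : ℝ)}) :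
    (∀ z : Fin n → ℂ, z ∈ E ↔ (fun t => w (x t) (z t)) ∈ E₀) ∧
    E₀ = (fun z : Fin n → ℂ => fun t => w (x t) (z t)) '' E :=
  stmt_7_general K n μ hμ w hw enc P N₀ u x hx E E₀ hE hE₀
end

section
/- (Symmetry of the two-block composite channel under systematic linear encoding.) Let G = (ZMod 2) × (ZMod 2), enc : G^K → G^n an additive group homomorphism, P a probability mass function on G^K, N₀ > 0, and γ the circularly symmetric complex Gaussian measure on ℂ^n with per-component variance N₀. For an information word v ∈ G^K, a discrete-noise realization u ∈ G^K and an AWGN realization z ∈ ℂ^n, say a MAP error occurs if there exists v' ≠ v with exp(−‖μ(enc(v))+z−μ(enc(v'))‖²/N₀)·P(v' + (v + u)) ≥ exp(−‖z‖²/N₀)·P(u) (the composite-channel MAP objective, where the first block output is s = v − u = v + u and P(v' − s) is the prior term). Then the error probability, computed with u distributed according to P and z according to γ, independent, is the same for every transmitted information word v as for v = 0. -/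
open MeasureTheory ProbabilityTheory
open scoped ENNReal

/-!
Let `T_c` flip the sign of the real part of a complex number according to `c.1` and that of the
imaginary part according to `c.2`. It is an isometry of `ℂ`, it preserves the circularly
symmetric Gaussian, and on Gray labels it is translation: `T_a (μ b) = μ (a + b)`. Applying
`T_{enc v}` coordinatewise to the channel noise and substituting `v' ↦ v' + v` in the decoder
therefore turns the error event for `v` into the error event for `0` (here linearity of `enc`
and characteristic `2` enter), and invariance of the noise law gives equal probabilities.
-/

noncomputable section

def zmodSign (c : ZMod 2) : ℝ := (-1) ^ c.val

lemma zmodSign_add (c d : ZMod 2) : zmodSign (c + d) = zmodSign c * zmodSign d := by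
  rw [zmodSign, zmodSign, zmodSign, ZMod.val_add, ← pow_add]
  exact (neg_one_pow_eq_pow_mod_two _).symm

lemma zmodSign_mul_self (c : ZMod 2) : zmodSign c * zmodSign c = 1 := by
  rw [← zmodSign_add, ZModModule.add_self, zmodSign, ZMod.val_zero, pow_zero]

def signFlip (c : ZMod 2 × ZMod 2) (z : ℂ) : ℂ := ⟨zmodSign c.1 * z.re, zmodSign c.2 * z.im⟩

lemma signFlip_involutive (c : ZMod 2 × ZMod 2) : Function.Involutive (signFlip c) := fun z => by
  simp only [signFlip, ← mul_assoc, zmodSign_mul_self, one_mul]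

lemma signFlip_add (c : ZMod 2 × ZMod 2) (z w : ℂ) :
    signFlip c (z + w) = signFlip c z + signFlip c w :=
  Complex.ext (by simp [signFlip, mul_add]) (by simp [signFlip, mul_add])

lemma signFlip_sub (c : ZMod 2 × ZMod 2) (z w : ℂ) :
    signFlip c (z - w) = signFlip c z - signFlip c w :=
  Complex.ext (by simp [signFlip, mul_sub]) (by simp [signFlip, mul_sub])

lemma norm_signFlip (c : ZMod 2 × ZMod 2) (z : ℂ) : ‖signFlip c z‖ = ‖z‖ := by
  simp only [Complex.norm_def, Complex.normSq_apply, signFlip]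
  congr 1
  linear_combination (z.re * z.re) * zmodSign_mul_self c.1 + (z.im * z.im) * zmodSign_mul_self c.2

lemma signFlip_eq_comp (c : ZMod 2 × ZMod 2) :
    signFlip c = Complex.measurableEquivRealProd.symm ∘
      Prod.map (zmodSign c.1 * ·) (zmodSign c.2 * ·) ∘ Complex.measurableEquivRealProd :=
  rfl

lemma measurable_signFlip (c : ZMod 2 × ZMod 2) : Measurable (signFlip c) := by
  rw [signFlip_eq_comp]
  fun_prop

def signFlipEquiv (c : ZMod 2 × ZMod 2) : ℂ ≃ᵐ ℂ where
  toFun := signFlip c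
  invFun := signFlip c
  left_inv := signFlip_involutive c
  right_inv := signFlip_involutive c
  measurable_toFun := measurable_signFlip c
  measurable_invFun := measurable_signFlip c

lemma measurePreserving_zmodSign_mul_gaussianReal (c : ZMod 2) (v : NNReal) :
    MeasurePreserving (zmodSign c * ·) (gaussianReal 0 v) (gaussianReal 0 v) where
  measurable := measurable_const_mul _
  map_eq := by
    rw [gaussianReal_map_const_mul, mul_zero]
    congr
    ext
    simp [sq, zmodSign_mul_self]

lemma measurePreserving_signFlip_gaussian (c : ZMod 2 × ZMod 2) (v w : NNReal) :
    MeasurePreserving (signFlip c)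
      (((gaussianReal 0 v).prod (gaussianReal 0 w)).map Complex.measurableEquivRealProd.symm)
      (((gaussianReal 0 v).prod (gaussianReal 0 w)).map Complex.measurableEquivRealProd.symm) where
  measurable := measurable_signFlip c
  map_eq := by
    have hprod := ((measurePreserving_zmodSign_mul_gaussianReal c.1 v).prod
      (measurePreserving_zmodSign_mul_gaussianReal c.2 w)).map_eq
    rw [Measure.map_map (measurable_signFlip c) (MeasurableEquiv.measurable _),
      show signFlip c ∘ Complex.measurableEquivRealProd.symm =
        Complex.measurableEquivRealProd.symm ∘ Prod.map (zmodSign c.1 * ·) (zmodSign c.2 * ·)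
        from rfl,
      ← Measure.map_map (MeasurableEquiv.measurable _) (by fun_prop), hprod]

def qpskGray (x : ZMod 2 × ZMod 2) : ℂ :=
  ((-1 : ℂ) ^ x.1.val + (-1 : ℂ) ^ x.2.val * Complex.I) / (Real.sqrt 2 : ℂ)

lemma qpskGray_eq_mk (x : ZMod 2 × ZMod 2) :
    qpskGray x = ⟨zmodSign x.1 / Real.sqrt 2, zmodSign x.2 / Real.sqrt 2⟩ := by
  have hsign (k : ℕ) : (-1 : ℂ) ^ k = ((-1 : ℝ) ^ k : ℝ) := by push_cast; rfl
  rw [qpskGray, hsign, hsign]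
  apply Complex.ext <;>
    simp only [zmodSign, Complex.div_ofReal_re, Complex.div_ofReal_im, Complex.add_re,
      Complex.add_im, Complex.mul_re, Complex.mul_im, Complex.ofReal_re, Complex.ofReal_im,
      Complex.I_re, Complex.I_im] <;> ring

lemma signFlip_qpskGray (a b : ZMod 2 × ZMod 2) : signFlip a (qpskGray b) = qpskGray (a + b) := by
  simp only [qpskGray_eq_mk, signFlip, Prod.fst_add, Prod.snd_add, zmodSign_add, mul_div_assoc]

lemma norm_qpskGray_zero_add_signFlip_sub (a b : ZMod 2 × ZMod 2) (ζ : ℂ) :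
    ‖qpskGray 0 + signFlip a ζ - qpskGray (b + a)‖ = ‖qpskGray a + ζ - qpskGray b‖ := by
  rw [← norm_signFlip a (qpskGray a + ζ - qpskGray b), signFlip_sub, signFlip_add,
    signFlip_qpskGray, signFlip_qpskGray, ZModModule.add_self, add_comm a b]

section MapDecoding

variable {V ι : Type*} [AddCommGroup V] [Module (ZMod 2) V] [Fintype ι]

/-- The systematic output is `s = v + u`, so `P (v' + (v + u))` is the prior `P (v' - s)`. -/
def MapDecodingError (enc : V →+ (ι → ZMod 2 × ZMod 2)) (P : V → NNReal) (N₀ : ℝ) (v u : V)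
    (z : ι → ℂ) : Prop :=
  ∃ v', v' ≠ v ∧
    Real.exp (-(∑ t, ‖z t‖ ^ 2) / N₀) * (P u : ℝ) ≤
      Real.exp (-(∑ t, ‖qpskGray (enc v t) + z t - qpskGray (enc v' t)‖ ^ 2) / N₀)
        * (P (v' + (v + u)) : ℝ)

lemma mapDecodingError_iff_zero_signFlip (enc : V →+ (ι → ZMod 2 × ZMod 2)) (P : V → NNReal)
    (N₀ : ℝ) (v u : V) (z : ι → ℂ) :
    MapDecodingError enc P N₀ v u z ↔
      MapDecodingError enc P N₀ 0 u (fun t => signFlip (enc v t) (z t)) := by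
  refine (Equiv.addRight v).exists_congr fun v' => ?_
  have hne : v' + v ≠ 0 ↔ v' ≠ v := by rw [← ZModModule.sub_eq_add, sub_ne_zero]
  simp only [Equiv.coe_addRight, hne, map_zero, Pi.zero_apply, map_add, Pi.add_apply,
    norm_signFlip, norm_qpskGray_zero_add_signFlip_sub, zero_add, add_assoc]

end MapDecoding

end

theorem stmt_9_general (K n : ℕ)
    (μ : ZMod 2 × ZMod 2 → ℂ)
    (hμ : ∀ x : ZMod 2 × ZMod 2,
      μ x = ((-1 : ℂ) ^ x.1.val + (-1 : ℂ) ^ x.2.val * Complex.I) / (Real.sqrt 2 : ℂ))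
    (enc : (Fin K → ZMod 2 × ZMod 2) →+ (Fin n → ZMod 2 × ZMod 2))
    (P : (Fin K → ZMod 2 × ZMod 2) → NNReal)
    (N₀ : NNReal)
    (γC : Measure ℂ)
    (hγC : γC = Measure.map (Complex.measurableEquivRealProd.symm)
      ((gaussianReal 0 (N₀ / 2)).prod (gaussianReal 0 (N₀ / 2))))
    (γ : Measure (Fin n → ℂ)) (hγ : γ = Measure.pi fun _ => γC)
    (Err : (Fin K → ZMod 2 × ZMod 2) → (Fin K → ZMod 2 × ZMod 2) → (Fin n → ℂ) → Prop)
    (hErr : ∀ v u z, Err v u z ↔ ∃ v', v' ≠ v ∧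
      Real.exp (-(∑ t, ‖z t‖ ^ 2) / (N₀ : ℝ)) * (P u : ℝ) ≤
        Real.exp (-(∑ t, ‖μ (enc v t) + z t - μ (enc v' t)‖ ^ 2) / (N₀ : ℝ))
          * (P (v' + (v + u)) : ℝ)) :
    ∀ v : Fin K → ZMod 2 × ZMod 2,
      ∑ u, (P u : ℝ≥0∞) * γ {z | Err v u z}
        = ∑ u, (P u : ℝ≥0∞) * γ {z | Err 0 u z} := by
  obtain rfl : μ = qpskGray := funext hμ
  obtain rfl : Err = MapDecodingError enc P N₀ := by
    funext v u z
    exact propext (hErr v u z)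
  intro v
  have hflipC (c : ZMod 2 × ZMod 2) : MeasurePreserving (signFlipEquiv c) γC γC :=
    hγC ▸ measurePreserving_signFlip_gaussian c _ _
  have : IsProbabilityMeasure γC := hγC ▸ Measure.isProbabilityMeasure_map (by fun_prop)
  have hflip : MeasurePreserving (MeasurableEquiv.piCongrRight fun t => signFlipEquiv (enc v t))
      γ γ :=
    hγ ▸ measurePreserving_pi _ _ fun t => hflipC (enc v t)
  refine Finset.sum_congr rfl fun u _ => congrArg _ ?_
  rw [← hflip.measure_preimage_equiv {z | MapDecodingError enc P N₀ 0 u z}]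
  exact congrArg γ (Set.ext fun z => mapDecodingError_iff_zero_signFlip enc P N₀ v u z)

/-- symmetry of the two-block composite channel under systematic linear
encoding: the MAP error probability of the composite channel, computed with discrete
noise `u ~ P` and AWGN `z ~ γ` independent, is the same for every transmitted
information word `v` as for `v = 0`. -/
theorem stmt_9 (K n : ℕ)
    (μ : ZMod 2 × ZMod 2 → ℂ)
    (hμ : ∀ x : ZMod 2 × ZMod 2,
      μ x = ((-1 : ℂ) ^ x.1.val + (-1 : ℂ) ^ x.2.val * Complex.I) / (Real.sqrt 2 : ℂ))
    (enc : (Fin K → ZMod 2 × ZMod 2) →+ (Fin n → ZMod 2 × ZMod 2))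
    (P : (Fin K → ZMod 2 × ZMod 2) → NNReal) (hP : ∑ u, P u = 1)
    (N₀ : NNReal) (hN₀ : 0 < N₀)
    (γC : Measure ℂ)
    (hγC : γC = Measure.map (Complex.measurableEquivRealProd.symm)
      ((gaussianReal 0 (N₀ / 2)).prod (gaussianReal 0 (N₀ / 2))))
    (γ : Measure (Fin n → ℂ)) (hγ : γ = Measure.pi fun _ => γC)
    (Err : (Fin K → ZMod 2 × ZMod 2) → (Fin K → ZMod 2 × ZMod 2) → (Fin n → ℂ) → Prop)
    (hErr : ∀ v u z, Err v u z ↔ ∃ v', v' ≠ v ∧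
      Real.exp (-(∑ t, ‖z t‖ ^ 2) / (N₀ : ℝ)) * (P u : ℝ) ≤
        Real.exp (-(∑ t, ‖μ (enc v t) + z t - μ (enc v' t)‖ ^ 2) / (N₀ : ℝ))
          * (P (v' + (v + u)) : ℝ)) :
    ∀ v : Fin K → ZMod 2 × ZMod 2,
      ∑ u, (P u : ℝ≥0∞) * γ {z | Err v u z}
        = ∑ u, (P u : ℝ≥0∞) * γ {z | Err 0 u z} :=
  stmt_9_general K n μ hμ enc P N₀ γC hγC γ hγ Err hErr
end

section
/- (Output-node step of the belief-propagation isomorphism, Theorem 2.) Let F be a finite field with q elements and ψ a nontrivial additive character, with DFT, IDFT and shifts as defined. Let I be a finite index set (the neighbors of an output node), fix v ∈ I, and for each v' ∈ I let g_{v'} ∈ F \ {0} be an edge label and u_{v'} ∈ F an input-node value; let d = Σ_{v'∈I} g_{v'}·u_{v'} (the output-node value imposed by the check constraint). Given messages a_{v'} : F → ℂ for v' ∈ I \ {v} and a channel message t_A : F → ℂ, define b_{v'} = a_{v'}^{+(−u_{v'})} and t_B = t_A^{+(−d)}. Define for X ∈ {A, B} the updated output-to-input message m_X = [IDFT( (∏_{v'∈I\{v}}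 DFT(X_{v'}^{×(g_{v'}^{-1})})) · DFT(t_X^{×(−1)}) )]^{×(−g_v)}, where X_{v'} denotes a_{v'} or b_{v'} and the product of functions is componentwise. Then m_B = m_A^{+(−u_v)}, i.e., m_B(k) = m_A(k − u_v) for all k ∈ F. -/
/-- Discrete Fourier transform over a finite field w.r.t. an additive character `ψ`. -/
noncomputable def dft {F : Type*} [Fintype F] [Mul F] (ψ : F → ℂ) (f : F → ℂ) : F → ℂ :=
  fun g => ∑ h, f h * ψ (h * g)

/-- Inverse discrete Fourier transform over a finite field w.r.t. an additive
character `ψ`. -/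
noncomputable def idft {F : Type*} [Fintype F] [Mul F] (ψ : F → ℂ) (f : F → ℂ) : F → ℂ :=
  fun h => (1 / (Fintype.card F : ℂ)) * ∑ g, f g * (starRingEnd ℂ) (ψ (h * g))

/-- Additive shift of a message: `f^{+g}(h) = f(h + g)`. -/
def shiftAdd {F : Type*} [Add F] (g : F) (f : F → ℂ) : F → ℂ := fun h => f (h + g)

/-- Multiplicative shift of a message: `f^{×g}(h) = f(g·h)`. -/
def shiftMul {F : Type*} [Mul F] (g : F) (f : F → ℂ) : F → ℂ := fun h => f (g * h)

/-!
Over `F`, the DFT turns an additive shift by `s` into modulation by the character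
`x ↦ ψ (-(s * x))`, and the IDFT turns such a modulation back into a shift. After rescaling by
`(g v')⁻¹`, the message `b v'` is `a v'` shifted by `-(g v' * u v')` and the channel message is
shifted by `d`, so the spectrum of scheme B is that of scheme A modulated by the character at
`d - ∑_{v' ≠ v} g v' * u v' = g v * u v` (the check constraint). Inverting the DFT and rescaling by
`-g v` turns this into the shift by `-u v`.
-/

open Finset

lemma map_zero_eq_one_or_eq_zero {A M : Type*} [AddZeroClass A] [MonoidWithZero M]
    [IsLeftCancelMulZero M] {ψ : A → M} (hψ : ∀ x y, ψ (x + y) = ψ x * ψ y) :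
    ψ 0 = 1 ∨ ψ = 0 := by
  by_cases h0 : ψ 0 = 0
  · exact Or.inr <| funext fun x => by rw [Pi.zero_apply, ← add_zero x, hψ, h0, mul_zero]
  · refine Or.inl <| mul_left_cancel₀ h0 ?_
    rw [← hψ, add_zero, mul_one]

lemma AddChar.map_sum_eq_prod {A M ι : Type*} [AddCommMonoid A] [CommMonoid M]
    (ψ : AddChar A M) (s : Finset ι) (f : ι → A) : ψ (∑ i ∈ s, f i) = ∏ i ∈ s, ψ (f i) :=
  map_prod ψ.toMonoidHom (fun i => Multiplicative.ofAdd (f i)) s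

lemma shiftMul_shiftAdd {F : Type*} [DivisionRing F] {a : F} (ha : a ≠ 0) (s : F) (f : F → ℂ) :
    shiftMul a (shiftAdd s f) = shiftAdd (a⁻¹ * s) (shiftMul a f) := by
  funext h
  simp only [shiftMul, shiftAdd, mul_add, mul_inv_cancel_left₀ ha]

section Fourier

variable {F : Type*} [Ring F] [Fintype F] (ψ : AddChar F ℂ)

lemma dft_shiftAdd (s : F) (f : F → ℂ) :
    dft ψ (shiftAdd s f) = fun x => ψ (-(s * x)) * dft ψ f x := by
  funext x
  rw [dft, dft, mul_sum]
  unfold shiftAdd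
  refine Fintype.sum_equiv (Equiv.addRight s) _ _ fun h => ?_
  have hinv : ψ (-(s * x)) * ψ (s * x) = 1 := by
    rw [← AddChar.map_add_eq_mul, neg_add_cancel, AddChar.map_zero_eq_one]
  rw [Equiv.coe_addRight, add_mul, AddChar.map_add_eq_mul]
  linear_combination -(f (h + s) * ψ (h * x)) * hinv

lemma idft_modulate_eq_shiftAdd (c : F) (P : F → ℂ) :
    idft ψ (fun x => ψ (-(c * x)) * P x) = shiftAdd c (idft ψ P) := by
  funext h
  simp only [idft, shiftAdd]
  congr 1
  refine sum_congr rfl fun x _ => ?_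
  rw [← AddChar.map_neg_eq_conj, ← AddChar.map_neg_eq_conj, add_mul, neg_add,
    AddChar.map_add_eq_mul]
  ring

lemma prod_dft_shiftAdd {I : Type*} (s : Finset I) (c : I → F) (f : I → F → ℂ) :
    ∏ i ∈ s, dft ψ (shiftAdd (c i) (f i)) =
      fun x => ψ (-((∑ i ∈ s, c i) * x)) * (∏ i ∈ s, dft ψ (f i)) x := by
  funext x
  simp only [prod_apply, dft_shiftAdd, prod_mul_distrib]
  rw [sum_mul, ← sum_neg_distrib, AddChar.map_sum_eq_prod]

end Fourier

section OutputNode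

variable {F I : Type*} [Field F] [Fintype F] [Fintype I] [DecidableEq I]

noncomputable def outputMessage (ψ : F → ℂ) (g : I → F) (v : I) (a : I → F → ℂ) (t : F → ℂ) :
    F → ℂ :=
  shiftMul (-g v) (idft ψ
    ((∏ v' ∈ univ.erase v, dft ψ (shiftMul (g v')⁻¹ (a v'))) * dft ψ (shiftMul (-1) t)))

theorem outputMessage_shiftAdd (ψ : AddChar F ℂ) {g : I → F} (hg : ∀ i, g i ≠ 0) (v : I)
    (u : I → F) (a : I → F → ℂ) (t : F → ℂ) :
    outputMessage ψ g v (fun i => shiftAdd (-u i) (a i)) (shiftAdd (-∑ i, g i * u i) t) =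
      shiftAdd (-u v) (outputMessage ψ g v a t) := by
  have hspec : (∏ i ∈ univ.erase v, dft ψ (shiftMul (g i)⁻¹ (shiftAdd (-u i) (a i)))) *
        dft ψ (shiftMul (-1) (shiftAdd (-∑ i, g i * u i) t)) =
      fun x => ψ (-(g v * u v * x)) *
        ((∏ i ∈ univ.erase v, dft ψ (shiftMul (g i)⁻¹ (a i))) * dft ψ (shiftMul (-1) t)) x := by
    simp only [shiftMul_shiftAdd (inv_ne_zero (hg _)),
      shiftMul_shiftAdd (neg_ne_zero.2 (one_ne_zero : (1 : F) ≠ 0))]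
    rw [prod_dft_shiftAdd, dft_shiftAdd]
    funext x
    have hphase : -((∑ i ∈ univ.erase v, (g i)⁻¹⁻¹ * -u i) * x) +
        -(((-1)⁻¹ * -∑ i, g i * u i) * x) = -(g v * u v * x) := by
      rw [← add_sum_erase _ _ (mem_univ v)]
      simp only [inv_inv, mul_neg, sum_neg_distrib, inv_neg, inv_one]
      ring
    rw [Pi.mul_apply, Pi.mul_apply, ← hphase, AddChar.map_add_eq_mul]
    ring
  rw [outputMessage, outputMessage, hspec, idft_modulate_eq_shiftAdd,
    shiftMul_shiftAdd (neg_ne_zero.2 (hg v)), inv_neg, neg_mul, inv_mul_cancel_left₀ (hg v)]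

end OutputNode

theorem stmt_12_general {F : Type*} [Field F] [Fintype F]
    (ψ : F → ℂ) (hψ_add : ∀ x y, ψ (x + y) = ψ x * ψ y)
    {I : Type*} [Fintype I] [DecidableEq I] (v : I)
    (g : I → F) (hg : ∀ v', g v' ≠ 0) (u : I → F)
    (d : F) (hd : d = ∑ v', g v' * u v')
    (a : I → F → ℂ) (tA : F → ℂ)
    (b : I → F → ℂ) (hb : ∀ v', b v' = shiftAdd (-u v') (a v'))
    (tB : F → ℂ) (htB : tB = shiftAdd (-d) tA)
    (mA : F → ℂ)
    (hmA : mA = shiftMul (-g v)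
      (idft ψ ((∏ v' ∈ Finset.univ.erase v, dft ψ (shiftMul (g v')⁻¹ (a v'))) *
        dft ψ (shiftMul (-1) tA))))
    (mB : F → ℂ)
    (hmB : mB = shiftMul (-g v)
      (idft ψ ((∏ v' ∈ Finset.univ.erase v, dft ψ (shiftMul (g v')⁻¹ (b v'))) *
        dft ψ (shiftMul (-1) tB)))) :
    ∀ k : F, mB k = mA (k - u v) := by
  intro k
  obtain h0 | hzero := map_zero_eq_one_or_eq_zero hψ_add
  · let χ : AddChar F ℂ := ⟨ψ, h0, hψ_add⟩
    obtain rfl : b = fun v' => shiftAdd (-u v') (a v') := funext hb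
    subst htB hd hmA hmB
    rw [sub_eq_add_neg]
    exact congrFun (outputMessage_shiftAdd χ hg v u a tA) k
  · -- `ψ = 0` also satisfies `hψ_add`; then every message vanishes.
    simp [hmA, hmB, hzero, idft, shiftMul]

/-- output-node step of the belief-propagation isomorphism, Theorem 2:
if the incoming input-node messages and the channel message of scheme B are the
additive shifts (by `−u_{v'}` and `−d` respectively, `d` being the output-node value
imposed by the check constraint) of those of scheme A, then the updated
output-to-input message of scheme B is the additive shift by `−u_v` of that of
scheme A: `m_B(k) = m_A(k − u_v)` for all `k`. -/
theorem stmt_12 {F : Type*} [Field F] [Fintype F] [DecidableEq F]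
    (ψ : F → ℂ) (hψ_add : ∀ x y, ψ (x + y) = ψ x * ψ y) (hψ_ne : ∃ x, ψ x ≠ 1)
    {I : Type*} [Fintype I] [DecidableEq I] (v : I)
    (g : I → F) (hg : ∀ v', g v' ≠ 0) (u : I → F)
    (d : F) (hd : d = ∑ v', g v' * u v')
    (a : I → F → ℂ) (tA : F → ℂ)
    (b : I → F → ℂ) (hb : ∀ v', b v' = shiftAdd (-u v') (a v'))
    (tB : F → ℂ) (htB : tB = shiftAdd (-d) tA)
    (mA : F → ℂ)
    (hmA : mA = shiftMul (-g v)
      (idft ψ ((∏ v' ∈ Finset.univ.erase v, dft ψ (shiftMul (g v')⁻¹ (a v'))) *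
        dft ψ (shiftMul (-1) tA))))
    (mB : F → ℂ)
    (hmB : mB = shiftMul (-g v)
      (idft ψ ((∏ v' ∈ Finset.univ.erase v, dft ψ (shiftMul (g v')⁻¹ (b v'))) *
        dft ψ (shiftMul (-1) tB)))) :
    ∀ k : F, mB k = mA (k - u v) :=
  stmt_12_general ψ hψ_add v g hg u d hd a tA b hb tB htB mA hmA mB hmB
end
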